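/- In the braid group B_N, for any ω = (ω_1, ..., ω_{N-1}) with ω_i ∈ {1,-1}, the braid α_ω = σ_1^{ω_1} σ_2^{ω_2} ··· σ_{N-1}^{ω_{N-1}} is conjugate in B_N to its reverse rev(α_ω) = σ_{N-1}^{ω_{N-1}} ··· σ_2^{ω_2} σ_1^{ω_1}. -/
import Mathlib

/-- The braid relations on `n` generators (Artin generators of `B_{n+1}`). -/
def braidRels (n : ℕ) : Set (FreeGroup (Fin n)) :=
  { r | (∃ i j : Fin n, (i : ℕ) + 2 ≤ (j : ℕ) ∧
          r = FreeGroup.of i * FreeGroup.of j * (FreeGroup.of i)⁻¹ * (FreeGroup.of j)⁻¹) ∨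
        (∃ i j : Fin n, (i : ℕ) + 1 = (j : ℕ) ∧
          r = FreeGroup.of i * FreeGroup.of j * FreeGroup.of i *
              (FreeGroup.of j * FreeGroup.of i * FreeGroup.of j)⁻¹) }

/-- The braid group with `n` Artin generators (braid group on `n+1` strands). -/
abbrev BraidGroup (n : ℕ) := PresentedGroup (braidRels n)

/-- `braidGen i` represents the Artin generator `σ_{i+1}`. -/
def braidGen {n : ℕ} (i : Fin n) : BraidGroup n := PresentedGroup.of i

/-- Far-apart Artin generators commute. -/
lemma braidGen_comm {n : ℕ} (i j : Fin n) (h : (i : ℕ) + 2 ≤ (j : ℕ)) :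
    Commute (braidGen i) (braidGen j) := by
  have hr : (FreeGroup.of i * FreeGroup.of j * (FreeGroup.of i)⁻¹ * (FreeGroup.of j)⁻¹ :
      FreeGroup (Fin n)) ∈ braidRels n := Or.inl ⟨i, j, h, rfl⟩
  have h1 : (PresentedGroup.mk (braidRels n))
      (FreeGroup.of i * FreeGroup.of j * (FreeGroup.of i)⁻¹ * (FreeGroup.of j)⁻¹) = 1 := by
    have : (FreeGroup.of i * FreeGroup.of j * (FreeGroup.of i)⁻¹ * (FreeGroup.of j)⁻¹ :
        FreeGroup (Fin n)) ∈ Subgroup.normalClosure (braidRels n) :=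
      Subgroup.subset_normalClosure hr
    exact (QuotientGroup.eq_one_iff _).2 this
  have h2 : braidGen i * braidGen j * (braidGen i)⁻¹ * (braidGen j)⁻¹ = 1 := by
    simpa [braidGen, PresentedGroup.of] using h1
  rw [mul_inv_eq_one, mul_inv_eq_iff_eq_mul] at h2
  exact h2

/-- Abstract single conjugation step. -/
lemma conj_step {G : Type*} [Group G] (z P R a : G) (hz : z * P * z⁻¹ = R)
    (ha : z * a = a * z) :
    (R⁻¹ * z) * (P * a) * (R⁻¹ * z)⁻¹ = a * R := by
  have hz' : z * P = R * z := by rw [← hz]; group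
  rw [mul_inv_rev, inv_inv]
  calc R⁻¹ * z * (P * a) * (z⁻¹ * R)
      = R⁻¹ * (z * P) * (a * z⁻¹ * R) := by group
    _ = R⁻¹ * (R * z) * (a * z⁻¹ * R) := by rw [hz']
    _ = (z * a) * (z⁻¹ * R) := by group
    _ = (a * z) * (z⁻¹ * R) := by rw [ha]
    _ = a * R := by group

/-- Key abstract lemma: if non-adjacent elements of a sequence commute, then each partial
product `g 0 * ⋯ * g (k-1)` is conjugate to its reverse, via a conjugator commuting with
all `g m`, `m ≥ k`. -/
lemma conj_reverse_aux {G : Type*} [Group G] (f : ℕ → G)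
    (hf : ∀ i j : ℕ, i + 2 ≤ j → Commute (f i) (f j)) :
    ∀ k : ℕ, ∃ z : G,
      z * ((List.range k).map f).prod * z⁻¹ = ((List.range k).map f).reverse.prod ∧
      ∀ m : ℕ, k ≤ m → Commute z (f m) := by
  intro k
  induction k with
  | zero => exact ⟨1, by simp, fun m _ => by simp⟩
  | succ k ih =>
    obtain ⟨z, hz, hc⟩ := ih
    set L : List G := (List.range k).map f with hL
    have hstep : (List.range (k + 1)).map f = L ++ [f k] := by
      rw [List.range_succ, List.map_append]; rfl
    have hLcomm : ∀ m : ℕ, k + 1 ≤ m → ∀ x ∈ L, Commute x (f m) := by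
      intro m hm x hx
      rw [hL, List.mem_map] at hx
      obtain ⟨i, hi, rfl⟩ := hx
      rw [List.mem_range] at hi
      exact hf i m (by omega)
    have hRcomm : ∀ m : ℕ, k + 1 ≤ m → Commute L.reverse.prod (f m) := by
      intro m hm
      exact Commute.list_prod_left _ _ (fun x hx => hLcomm m hm x (by simpa using hx))
    refine ⟨L.reverse.prod⁻¹ * z, ?_, ?_⟩
    · rw [hstep, List.reverse_append, List.prod_append, List.prod_append]
      simp only [List.reverse_cons, List.reverse_nil, List.nil_append, List.prod_cons,
        List.prod_nil, mul_one]
      exact conj_step z L.prod L.reverse.prod (f k) hz (hc k le_rfl).eq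
    · intro m hm
      exact ((hRcomm m hm).inv_left).mul_left (hc m (by omega))

/-- In `B_N`, for any `ω = (ω₁, …, ω_{N-1})` with `ωᵢ ∈ {1,-1}`, the braid
`α_ω = σ₁^{ω₁} σ₂^{ω₂} ⋯ σ_{N-1}^{ω_{N-1}}` is conjugate in `B_N` to its
reverse `rev(α_ω) = σ_{N-1}^{ω_{N-1}} ⋯ σ₂^{ω₂} σ₁^{ω₁}`. -/
theorem alpha_conj_rev (N : ℕ) (hN : 3 ≤ N) (ω : Fin (N - 1) → ℤ)
    (hω : ∀ i, ω i = 1 ∨ ω i = -1) :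
    IsConj
      ((List.ofFn (fun i : Fin (N - 1) => braidGen i ^ ω i)).prod)
      ((List.ofFn (fun i : Fin (N - 1) => braidGen i ^ ω i)).reverse.prod) := by
  set f : ℕ → BraidGroup (N - 1) :=
    fun m => if h : m < N - 1 then braidGen ⟨m, h⟩ ^ ω ⟨m, h⟩ else 1 with hfdef
  have hf : ∀ i j : ℕ, i + 2 ≤ j → Commute (f i) (f j) := by
    intro i j hij
    by_cases hi : i < N - 1
    · by_cases hj : j < N - 1
      · simp only [hfdef, dif_pos hi, dif_pos hj]
        exact (braidGen_comm ⟨i, hi⟩ ⟨j, hj⟩ hij).zpow_zpow _ _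
      · simp [hfdef, dif_neg hj]
    · simp [hfdef, dif_neg hi]
  obtain ⟨z, hz, -⟩ := conj_reverse_aux f hf (N - 1)
  have hlist : (List.range (N - 1)).map f
      = List.ofFn (fun i : Fin (N - 1) => braidGen i ^ ω i) := by
    apply List.ext_getElem
    · simp
    · intro i h1 h2
      have hi : i < N - 1 := by simpa using h2
      simp [hfdef, hi]
  rw [hlist] at hz
  exact isConj_iff.2 ⟨z, hz⟩
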